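/- Let $A \in \mathbb{C}^{m\times n}$, let $C \in \mathbb{C}^{m\times k}$ have full column rank (i.e. $C^* C$ invertible) with $C^+ := (C^* C)^{-1} C^*$, and let $V \in \mathbb{C}^{n\times r}$ have orthonormal columns, $V^* V = I_r$. Then $\|A - C C^+ A V V^*\|_F^2 \le \|(I_m - C C^+) A\|_F^2 + \|A (I_n - V V^*)\|_F^2$. -/

import Mathlib

open scoped BigOperators
open Matrix

/-- Squared Frobenius norm of a complex matrix. -/
noncomputable def frobSq {m n : Type*} [Fintype m] [Fintype n] (M : Matrix m n ℂ) : ℝ :=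
  ∑ i, ∑ j, ‖M i j‖ ^ 2

/-
Write `P = C C⁺` and `Q = V V^*`. Then `A - P A Q = (1 - P) A Q + A (1 - Q)`, and since `Q` is an
orthogonal projection the rows of the two summands lie in the orthogonal subspaces `range Q` and
`range (1 - Q)`, so Pythagoras splits the squared Frobenius norm. Finally right multiplication by
the orthogonal projection `Q` does not increase the Frobenius norm.
-/

section Frobenius

variable {m n : Type*} [Fintype m] [Fintype n]

lemma frobSq_nonneg (M : Matrix m n ℂ) : 0 ≤ frobSq M := by
  unfold frobSq
  positivity

lemma frobSq_eq_re_trace (M : Matrix m n ℂ) : frobSq M = (Mᴴ * M).trace.re := by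
  simp only [frobSq, trace, diag_apply, mul_apply, conjTranspose_apply, Complex.re_sum]
  rw [Finset.sum_comm]
  refine Finset.sum_congr rfl fun i _ => Finset.sum_congr rfl fun j _ => ?_
  rw [Complex.star_def, Complex.conj_mul', ← Complex.ofReal_pow, Complex.ofReal_re]

lemma frobSq_add_of_mul_conjTranspose_eq_zero {X Y : Matrix m n ℂ} (h : X * Yᴴ = 0) :
    frobSq (X + Y) = frobSq X + frobSq Y := by
  have hXY : (Xᴴ * Y).trace = 0 := by
    rw [trace_mul_comm, ← conjTranspose_conjTranspose Y, ← conjTranspose_mul, h,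
      conjTranspose_zero, trace_zero]
  have hYX : (Yᴴ * X).trace = 0 := by rw [trace_mul_comm, h, trace_zero]
  simp only [frobSq_eq_re_trace, conjTranspose_add, Matrix.add_mul, Matrix.mul_add, trace_add,
    hXY, hYX, Complex.add_re, Complex.zero_re]
  ring

variable [DecidableEq n] {Q : Matrix n n ℂ}

lemma frobSq_mul_add_mul_one_sub (hQ : IsStarProjection Q) (X Y : Matrix m n ℂ) :
    frobSq (X * Q + Y * (1 - Q)) = frobSq (X * Q) + frobSq (Y * (1 - Q)) := by
  refine frobSq_add_of_mul_conjTranspose_eq_zero ?_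
  rw [conjTranspose_mul, ← star_eq_conjTranspose (1 - Q), hQ.one_sub.isSelfAdjoint.star_eq,
    Matrix.mul_assoc, ← Matrix.mul_assoc Q, hQ.mul_one_sub_self, Matrix.zero_mul,
    Matrix.mul_zero]

lemma frobSq_mul_le (hQ : IsStarProjection Q) (X : Matrix m n ℂ) : frobSq (X * Q) ≤ frobSq X := by
  have hsplit := frobSq_mul_add_mul_one_sub hQ X X
  rw [← Matrix.mul_add, add_sub_cancel, Matrix.mul_one] at hsplit
  linarith [frobSq_nonneg (X * (1 - Q))]

end Frobenius

lemma Matrix.isStarProjection_mul_conjTranspose {R n r : Type*} [CommSemiring R] [StarRing R]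
    [Fintype n] [Fintype r] [DecidableEq r] {V : Matrix n r R} (hV : Vᴴ * V = 1) : IsStarProjection (V * Vᴴ) where
  isIdempotentElem := by
    rw [IsIdempotentElem, Matrix.mul_assoc, ← Matrix.mul_assoc Vᴴ, hV, Matrix.one_mul]
  isSelfAdjoint := by
    rw [IsSelfAdjoint, star_eq_conjTranspose, conjTranspose_mul, conjTranspose_conjTranspose]

theorem hybrid_error_splitting_general {m n k r : ℕ}
    (A : Matrix (Fin m) (Fin n) ℂ)
    (C : Matrix (Fin m) (Fin k) ℂ)
    (V : Matrix (Fin n) (Fin r) ℂ) (hV : Vᴴ * V = 1) :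
    frobSq (A - C * ((Cᴴ * C)⁻¹ * Cᴴ) * A * (V * Vᴴ)) ≤
      frobSq ((1 - C * ((Cᴴ * C)⁻¹ * Cᴴ)) * A) + frobSq (A * (1 - V * Vᴴ)) := by
  set P := C * ((Cᴴ * C)⁻¹ * Cᴴ)
  set Q := V * Vᴴ
  have hQ : IsStarProjection Q := isStarProjection_mul_conjTranspose hV
  have hsplit : A - P * A * Q = (1 - P) * A * Q + A * (1 - Q) := by
    simp only [Matrix.sub_mul, Matrix.mul_sub, Matrix.one_mul, Matrix.mul_one]
    abel
  rw [hsplit, frobSq_mul_add_mul_one_sub hQ]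
  exact add_le_add_left (frobSq_mul_le hQ _) _

/-- Error splitting for the matrix hybrid CUR-type approximation: with `C` of full
column rank, `C⁺ = (C^*C)⁻¹C^*`, and `V` with orthonormal columns,
`‖A - C C⁺ A V V^*‖_F² ≤ ‖(I - C C⁺) A‖_F² + ‖A (I - V V^*)‖_F²`. -/
theorem hybrid_error_splitting {m n k r : ℕ}
    (A : Matrix (Fin m) (Fin n) ℂ)
    (C : Matrix (Fin m) (Fin k) ℂ) (hC : IsUnit (Cᴴ * C))
    (V : Matrix (Fin n) (Fin r) ℂ) (hV : Vᴴ * V = 1) :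
    frobSq (A - C * ((Cᴴ * C)⁻¹ * Cᴴ) * A * (V * Vᴴ)) ≤
      frobSq ((1 - C * ((Cᴴ * C)⁻¹ * Cᴴ)) * A) + frobSq (A * (1 - V * Vᴴ)) :=
  hybrid_error_splitting_general A C V hV
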